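/- For a ∈ (0,1) let P_a = {(x₁,x₂) ∈ ℝ² : x₁ ≥ 0, x₂ ≥ 0, x₁ + x₂ ≤ 1, x₂ ≤ a} and on its interior define u_G(x₁,x₂) = (1/2)( x₁ log x₁ − x₁ + x₂ log x₂ − x₂ + (1−x₁−x₂) log(1−x₁−x₂) − (1−x₁−x₂) + (a−x₂) log(a−x₂) − (a−x₂) ). Then: (i) for every (x₁,x₂) in the interior of P_a, det Hess u_G (x₁,x₂) = (a − x₂²) / (4 x₁ x₂ (a−x₂)(1−x₁−x₂)); (ii) a point (x₁,x₂) in the interior of P_a is a critical point of det Hess u_G if and only if x₁ = (1−x₂)/2 and 2x₂⁴ − a x₂³ − 5a x₂² + a(3a+2) x₂ − a² = 0; and (iii) for every a ∈ (0,1) the polynomial y ↦ 2y⁴ − ay³ − 5ay² + a(3a+2)y − a² has exactly one root in (0,a), so that det Hess u_G has a unique critical point in the interior of P_a. -/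

import Mathlib

/-!
For affine functions `ℓ k` with constant differentials `L k`, the Guillemin potential
`½ ∑ ℓ k log ℓ k - ℓ k` has Hessian `½ ∑ (L k)ᵀ (L k) / ℓ k`; for the four facets of `P_a` this
gives the determinant formula. Writing `det Hess u_G = N / Q`, a critical point is one where
`Q dN = N dQ`: the `dx₀`-component forces `x 0 = (1 - x 1) / 2`, and on that line the
`dx₁`-component is `(1 - x 1)` times the quartic. On `(0, a)` the quartic is a positive multiple of
the logarithmic derivative of the determinant along that line, which is strictly increasing, and it
changes sign between `0` and `a`; so it has exactly one root there.
-/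

open Real Set Topology Filter Matrix

/-- `i`-th partial derivative of a function on `ℝⁿ`. -/
noncomputable def pd {n : ℕ} (i : Fin n) (f : (Fin n → ℝ) → ℝ) : (Fin n → ℝ) → ℝ :=
  fun x => fderiv ℝ f x (Pi.single i 1)

/-- Hessian matrix of a function on `ℝⁿ`. -/
noncomputable def Hess {n : ℕ} (u : (Fin n → ℝ) → ℝ) (x : Fin n → ℝ) :
    Matrix (Fin n) (Fin n) ℝ :=
  Matrix.of fun i j => pd i (pd j u) x

/-- The orbital volume function `V = (det Hess u)^(-1/2)`. -/
noncomputable def orbVol {n : ℕ} (u : (Fin n → ℝ) → ℝ) : (Fin n → ℝ) → ℝ :=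
  fun x => (Hess u x).det ^ (-(1/2 : ℝ))

/-- Guillemin potential of the one-point blow-up of `ℂP²` with parameter `a`. -/
noncomputable def uGHirz (a : ℝ) : (Fin 2 → ℝ) → ℝ := fun x =>
  (1/2) * (x 0 * Real.log (x 0) - x 0 + x 1 * Real.log (x 1) - x 1
    + (1 - x 0 - x 1) * Real.log (1 - x 0 - x 1) - (1 - x 0 - x 1)
    + (a - x 1) * Real.log (a - x 1) - (a - x 1))

/-- Interior of the moment polytope of the one-point blow-up of `ℂP²`. -/
def hirzInt (a : ℝ) : Set (Fin 2 → ℝ) :=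
  {x | 0 < x 0 ∧ 0 < x 1 ∧ x 0 + x 1 < 1 ∧ x 1 < a}

section Guillemin

variable {n : ℕ} {ι : Type*} [Fintype ι]

noncomputable def guilleminPotential (ℓ : ι → (Fin n → ℝ) → ℝ) : (Fin n → ℝ) → ℝ :=
  fun x => (1/2) * ∑ k, (ℓ k x * log (ℓ k x) - ℓ k x)

theorem HasFDerivAt.mul_log_sub {E : Type*} [NormedAddCommGroup E] [NormedSpace ℝ E]
    {f : E → ℝ} {f' : E →L[ℝ] ℝ} {x : E} (hf : HasFDerivAt f f' x) (hx : f x ≠ 0) :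
    HasFDerivAt (fun y => f y * Real.log (f y) - f y) (Real.log (f x) • f') x := by
  refine ((hf.mul (hf.log hx)).sub hf).congr_fderiv ?_
  rw [smul_smul, mul_inv_cancel₀ hx, one_smul]
  abel

variable {ℓ : ι → (Fin n → ℝ) → ℝ} {L : ι → (Fin n → ℝ) →L[ℝ] ℝ} {x : Fin n → ℝ}

theorem hasFDerivAt_guilleminPotential (hℓ : ∀ k, HasFDerivAt (ℓ k) (L k) x)
    (hx : ∀ k, ℓ k x ≠ 0) :
    HasFDerivAt (guilleminPotential ℓ) ((1/2 : ℝ) • ∑ k, log (ℓ k x) • L k) x :=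
  (HasFDerivAt.fun_sum (u := Finset.univ) fun k _ => (hℓ k).mul_log_sub (hx k)).const_mul _

theorem pd_guilleminPotential (hℓ : ∀ k, HasFDerivAt (ℓ k) (L k) x) (hx : ∀ k, ℓ k x ≠ 0)
    (j : Fin n) :
    pd j (guilleminPotential ℓ) x = (1/2) * ∑ k, log (ℓ k x) * L k (Pi.single j 1) := by
  simp [pd, (hasFDerivAt_guilleminPotential hℓ hx).fderiv]

theorem hess_guilleminPotential (hℓ : ∀ k y, HasFDerivAt (ℓ k) (L k) y)
    (hx : ∀ k, ℓ k x ≠ 0) :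
    Hess (guilleminPotential ℓ) x =
      of fun i j => (1/2) * ∑ k, L k (Pi.single i 1) * L k (Pi.single j 1) / ℓ k x := by
  ext i j
  have hnear : ∀ᶠ y in 𝓝 x, ∀ k, ℓ k y ≠ 0 :=
    eventually_all.2 fun k => (hℓ k x).continuousAt.eventually_ne (hx k)
  have hpd : pd j (guilleminPotential ℓ) =ᶠ[𝓝 x]
      fun y => (1/2) * ∑ k, log (ℓ k y) * L k (Pi.single j 1) := by
    filter_upwards [hnear] with y hy using pd_guilleminPotential (fun k => hℓ k y) hy j
  have hderiv := ((HasFDerivAt.fun_sum (u := Finset.univ) fun k _ =>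
    (((hℓ k x).log (hx k)).mul_const (L k (Pi.single j 1)))).const_mul (1/2 : ℝ))
  simp only [Hess, pd, of_apply, hpd.fderiv_eq, hderiv.fderiv]
  simp [div_eq_inv_mul, mul_comm, mul_left_comm]

end Guillemin

theorem HasFDerivAt.div {E : Type*} [NormedAddCommGroup E] [NormedSpace ℝ E]
    {c d : E → ℝ} {c' d' : E →L[ℝ] ℝ} {x : E}
    (hc : HasFDerivAt c c' x) (hd : HasFDerivAt d d' x) (hx : d x ≠ 0) :
    HasFDerivAt (fun y => c y / d y) ((d x ^ 2)⁻¹ • (d x • c' - c x • d')) x := by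
  simp_rw [div_eq_mul_inv]
  refine (hc.mul ((hasDerivAt_inv hx).comp_hasFDerivAt x hd)).congr_fderiv ?_
  ext v
  simp only [Function.comp_apply, _root_.add_apply, _root_.sub_apply, _root_.smul_apply,
    smul_eq_mul]
  field_simp
  ring

section Hirzebruch

variable {a : ℝ} {x : Fin 2 → ℝ}

local notation "dx₀" => ContinuousLinearMap.proj (R := ℝ) (φ := fun _ : Fin 2 => ℝ) 0
local notation "dx₁" => ContinuousLinearMap.proj (R := ℝ) (φ := fun _ : Fin 2 => ℝ) 1

def hirzPoly (a y : ℝ) : ℝ := 2*y^4 - a*y^3 - 5*a*y^2 + a*(3*a+2)*y - a^2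

def hirzFacet (a : ℝ) : Fin 4 → (Fin 2 → ℝ) → ℝ :=
  ![fun y => y 0, fun y => y 1, fun y => 1 - y 0 - y 1, fun y => a - y 1]

noncomputable def hirzNormal : Fin 4 → (Fin 2 → ℝ) →L[ℝ] ℝ :=
  ![dx₀, dx₁, -dx₀ - dx₁, -dx₁]

theorem hasFDerivAt_hirzFacet (a : ℝ) (k : Fin 4) (y : Fin 2 → ℝ) :
    HasFDerivAt (hirzFacet a k) (hirzNormal k) y := by
  have hcoord i := hasFDerivAt_apply (𝕜 := ℝ) i y
  fin_cases k
  · exact hcoord 0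
  · exact hcoord 1
  · exact ((hasFDerivAt_const 1 y).sub (hcoord 0)).sub (hcoord 1) |>.congr_fderiv
      (by rw [zero_sub]; rfl)
  · exact (hasFDerivAt_const a y).sub (hcoord 1) |>.congr_fderiv (by rw [zero_sub]; rfl)

theorem uGHirz_eq_guilleminPotential (a : ℝ) : uGHirz a = guilleminPotential (hirzFacet a) := by
  funext y
  simp only [uGHirz, guilleminPotential, hirzFacet, Fin.sum_univ_four, cons_val]
  ring

theorem hirzFacet_pos (hx : x ∈ hirzInt a) (k : Fin 4) : 0 < hirzFacet a k x := by
  obtain ⟨h0, h1, hs, hw⟩ := hx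
  fin_cases k <;> simp only [hirzFacet, Fin.zero_eta, Fin.mk_one, Fin.reduceFinMk, cons_val]
    <;> linarith

theorem isOpen_hirzInt (a : ℝ) : IsOpen (hirzInt a) := by
  refine .and (isOpen_lt ?_ ?_) (.and (isOpen_lt ?_ ?_) (.and (isOpen_lt ?_ ?_) (isOpen_lt ?_ ?_)))
    <;> fun_prop

theorem det_hess_uGHirz (hx : x ∈ hirzInt a) :
    (Hess (uGHirz a) x).det =
      (a - (x 1)^2) / (4 * x 0 * x 1 * (a - x 1) * (1 - x 0 - x 1)) := by
  rw [uGHirz_eq_guilleminPotential, hess_guilleminPotential (hasFDerivAt_hirzFacet a)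
    fun k => (hirzFacet_pos hx k).ne', det_fin_two]
  obtain ⟨h0, h1, hs, hw⟩ := hx
  simp only [of_apply, Fin.sum_univ_four, hirzNormal, hirzFacet, cons_val, _root_.sub_apply,
    _root_.neg_apply, ContinuousLinearMap.proj_apply, Pi.single_eq_same,
    Pi.single_eq_of_ne zero_ne_one, Pi.single_eq_of_ne one_ne_zero]
  have : 1 - x 0 - x 1 ≠ 0 := by linarith
  have : a - x 1 ≠ 0 := by linarith
  field_simp
  ring

theorem proj_combination_eq_zero_iff (c₀ c₁ : ℝ) :
    c₀ • dx₀ + c₁ • dx₁ = 0 ↔ c₀ = 0 ∧ c₁ = 0 := by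
  refine ⟨fun h => ⟨?_, ?_⟩, by rintro ⟨rfl, rfl⟩; simp⟩
  · simpa using congr($h (Pi.single 0 1))
  · simpa using congr($h (Pi.single 1 1))

theorem hasFDerivAt_hirzDetDenom (a : ℝ) (x : Fin 2 → ℝ) :
    HasFDerivAt (fun y : Fin 2 → ℝ => 4 * y 0 * y 1 * (a - y 1) * (1 - y 0 - y 1))
      ((4 * x 1 * (a - x 1) * (1 - 2 * x 0 - x 1)) • dx₀ +
        (4 * x 0 * ((a - 2 * x 1) * (1 - x 0 - x 1) - x 1 * (a - x 1))) • dx₁) x := by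
  have hcoord i := hasFDerivAt_apply (𝕜 := ℝ) i x
  refine ((((hcoord 0).const_mul 4).mul (hcoord 1)).mul
    ((hasFDerivAt_const a x).sub (hcoord 1))).mul
    (((hasFDerivAt_const 1 x).sub (hcoord 0)).sub (hcoord 1)) |>.congr_fderiv ?_
  ext v
  simp only [Pi.mul_apply, Pi.sub_apply, _root_.add_apply, _root_.sub_apply, _root_.smul_apply,
    _root_.zero_apply, ContinuousLinearMap.proj_apply, smul_eq_mul]
  ring

theorem fderiv_det_hess_uGHirz_eq_zero_iff (hx : x ∈ hirzInt a) :
    fderiv ℝ (fun y => (Hess (uGHirz a) y).det) x = 0 ↔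
      x 0 = (1 - x 1) / 2 ∧ hirzPoly a (x 1) = 0 := by
  have hdet : (fun y => (Hess (uGHirz a) y).det) =ᶠ[𝓝 x]
      fun y => (a - y 1 ^ 2) / (4 * y 0 * y 1 * (a - y 1) * (1 - y 0 - y 1)) := by
    filter_upwards [(isOpen_hirzInt a).mem_nhds hx] with y hy using det_hess_uGHirz hy
  have hnum : HasFDerivAt (fun y : Fin 2 → ℝ => a - y 1 ^ 2) ((-2 * x 1) • dx₁) x :=
    (hasFDerivAt_const a x).sub ((hasFDerivAt_apply 1 x).pow 2) |>.congr_fderiv (by ext; simp)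
  obtain ⟨h0, h1, hs, hw⟩ := hx
  have hs' : 1 - x 0 - x 1 ≠ 0 := by linarith
  have hw' : a - x 1 ≠ 0 := by linarith
  have hQ : 4 * x 0 * x 1 * (a - x 1) * (1 - x 0 - x 1) ≠ 0 := by
    simp [hs', hw', h0.ne', h1.ne']
  have hN : a - x 1 ^ 2 ≠ 0 := by nlinarith
  rw [hdet.fderiv_eq, (hnum.div (hasFDerivAt_hirzDetDenom a x) hQ).fderiv,
    smul_eq_zero_iff_right (inv_ne_zero (pow_ne_zero 2 hQ))]
  set Q := 4 * x 0 * x 1 * (a - x 1) * (1 - x 0 - x 1)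
  set N := a - x 1 ^ 2
  set q₀ := 4 * x 1 * (a - x 1) * (1 - 2 * x 0 - x 1)
  set q₁ := 4 * x 0 * ((a - 2 * x 1) * (1 - x 0 - x 1) - x 1 * (a - x 1))
  have hsplit : Q • (-2 * x 1) • dx₁ - N • (q₀ • dx₀ + q₁ • dx₁) =
      (-(N * q₀)) • dx₀ + (Q * (-2 * x 1) - N * q₁) • dx₁ := by
    module
  rw [hsplit, proj_combination_eq_zero_iff, neg_eq_zero, mul_eq_zero, or_iff_right hN]
  have hmid : q₀ = 0 ↔ x 0 = (1 - x 1) / 2 := by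
    simp only [q₀, mul_eq_zero, four_ne_zero, h1.ne', hw', false_or]
    constructor <;> intro h <;> linarith
  rw [hmid]
  refine and_congr_right fun hx₀ => ?_
  have h1' : 1 - x 1 ≠ 0 := by linarith
  have hQN : Q * (-2 * x 1) - N * q₁ = (1 - x 1) * hirzPoly a (x 1) := by
    simp only [Q, N, q₁, hx₀, hirzPoly]
    ring
  rw [hQN, mul_eq_zero, or_iff_right h1']

end Hirzebruch

section Midline

variable {a : ℝ}

/-- The logarithmic derivative of `y ↦ (a - y ^ 2) / (y * (a - y) * (1 - y) ^ 2)`, which is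
`det Hess (uGHirz a)` along the line `x 0 = (1 - x 1) / 2`. -/
noncomputable def midlineLogDeriv (a y : ℝ) : ℝ :=
  -2 * y / (a - y ^ 2) - 1 / y + 1 / (a - y) + 2 / (1 - y)

theorem strictMonoOn_midlineLogDeriv (ha : a ∈ Ioo (0:ℝ) 1) :
    StrictMonoOn (midlineLogDeriv a) (Ioo 0 a) := by
  obtain ⟨ha0, ha1⟩ := ha
  set s := √a
  have hs0 : 0 < s := sqrt_pos.2 ha0
  have hsa : s ^ 2 = a := sq_sqrt ha0.le
  have has : a < s := by nlinarith
  -- partial fractions over `s = √a`; as `a < s`, each summand increases on `(0, a)`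
  have hdecomp : EqOn (midlineLogDeriv a)
      (fun y => (s - a) / ((a - y) * (s - y)) - s / (y * (y + s)) + 2 / (1 - y)) (Ioo 0 a) := by
    rintro y ⟨hy0, hya⟩
    have : s ^ 2 - y ≠ 0 := by nlinarith
    have : s - y ≠ 0 := by linarith
    have : 1 - y ≠ 0 := by nlinarith
    have : s ^ 2 - y ^ 2 ≠ 0 := by nlinarith
    rw [midlineLogDeriv, ← hsa]
    field_simp
    ring
  refine StrictMonoOn.congr ?_ hdecomp.symm
  rintro y₁ ⟨hy₁0, hy₁a⟩ y₂ ⟨hy₂0, hy₂a⟩ h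
  have : 0 < s - a := by linarith
  dsimp only
  gcongr
  all_goals nlinarith

theorem hirzPoly_eq_mul_midlineLogDeriv {y : ℝ} (ha : a < 1) (hy : y ∈ Ioo 0 a) :
    hirzPoly a y = y * (a - y) * (1 - y) * (a - y ^ 2) * midlineLogDeriv a y := by
  obtain ⟨hy0, hya⟩ := hy
  have : a - y ≠ 0 := by linarith
  have : 1 - y ≠ 0 := by linarith
  have : a - y ^ 2 ≠ 0 := by nlinarith
  rw [hirzPoly, midlineLogDeriv]
  field_simp
  ring

theorem existsUnique_hirzPoly_root (ha : a ∈ Ioo (0:ℝ) 1) :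
    ∃! y, y ∈ Ioo 0 a ∧ hirzPoly a y = 0 := by
  obtain ⟨ha0, ha1⟩ := ha
  have hsign : (0:ℝ) ∈ Ioo (hirzPoly a 0) (hirzPoly a a) := by
    constructor <;> simp only [hirzPoly] <;> nlinarith [mul_pos ha0 (sub_pos.2 ha1)]
  obtain ⟨y, hy, hpy⟩ := intermediate_value_Ioo ha0.le (by unfold hirzPoly; fun_prop) hsign
  have hzero : ∀ y ∈ Ioo 0 a, hirzPoly a y = 0 → midlineLogDeriv a y = 0 := by
    rintro y ⟨hy0, hya⟩ hpy
    rw [hirzPoly_eq_mul_midlineLogDeriv ha1 ⟨hy0, hya⟩] at hpy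
    have hfactor : 0 < y * (a - y) * (1 - y) * (a - y ^ 2) :=
      mul_pos (mul_pos (mul_pos hy0 (by linarith)) (by linarith)) (by nlinarith)
    exact (mul_eq_zero.1 hpy).resolve_left hfactor.ne'
  refine ⟨y, ⟨hy, hpy⟩, fun z ⟨hz, hpz⟩ => ?_⟩
  exact (strictMonoOn_midlineLogDeriv ⟨ha0, ha1⟩).injOn hz hy
    ((hzero z hz hpz).trans (hzero y hy hpy).symm)

end Midline

theorem stmt18 (a : ℝ) (ha : a ∈ Ioo (0:ℝ) 1) :
    (∀ x ∈ hirzInt a, (Hess (uGHirz a) x).det =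
      (a - (x 1)^2) / (4 * x 0 * x 1 * (a - x 1) * (1 - x 0 - x 1))) ∧
    (∀ x ∈ hirzInt a,
      (fderiv ℝ (fun y => (Hess (uGHirz a) y).det) x = 0 ↔
        (x 0 = (1 - x 1)/2 ∧
          2*(x 1)^4 - a*(x 1)^3 - 5*a*(x 1)^2 + a*(3*a+2)*(x 1) - a^2 = 0))) ∧
    (∃! y, y ∈ Ioo (0:ℝ) a ∧
      2*y^4 - a*y^3 - 5*a*y^2 + a*(3*a+2)*y - a^2 = 0) ∧
    (∃! x, x ∈ hirzInt a ∧
      fderiv ℝ (fun y => (Hess (uGHirz a) y).det) x = 0) := by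
  have hcrit := fun x (hx : x ∈ hirzInt a) => fderiv_det_hess_uGHirz_eq_zero_iff hx
  obtain ⟨y, ⟨hy, hpy⟩, hy_unique⟩ := existsUnique_hirzPoly_root ha
  have hmem : ![(1 - y) / 2, y] ∈ hirzInt a := by
    refine ⟨?_, ?_, ?_, ?_⟩ <;> simp only [cons_val_zero, cons_val_one, cons_val_fin_one]
      <;> linarith [hy.1, hy.2, ha.2]
  refine ⟨fun x hx => det_hess_uGHirz hx, hcrit, ⟨y, ⟨hy, hpy⟩, hy_unique⟩,
    ![(1 - y) / 2, y], ⟨hmem, (hcrit _ hmem).2 ⟨rfl, hpy⟩⟩, ?_⟩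
  rintro x ⟨hx, hx_crit⟩
  obtain ⟨hx₀, hx₁⟩ := (hcrit x hx).1 hx_crit
  have hx₁y : x 1 = y := hy_unique _ ⟨⟨hx.2.1, hx.2.2.2⟩, hx₁⟩
  ext i
  fin_cases i <;> simp [hx₀, hx₁y]
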